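/- arXiv:1911.09394 — 2 statements merged into one kernel-verified Lean document; each statement's English description precedes it below -/
import Mathlib

section
/- If ⟨A, F⟩ is a subdirect product (in the non-indexed sense, with surjective projections) of a family of matrices ⟨A_i, F_i⟩ with F nonempty, and each matrix ⟨A_i, F_i⟩ is reduced (its Leibniz congruence is the identity), then ⟨A, F⟩ is reduced. -/
/-- An algebraic language: a family of operation symbols indexed by arity.
(Following the paper, there are no nullary symbols; constants are treated as
unary constant operations where needed.) -/
structure Lang : Type 1 where
  ops : ℕ → Type

/-- An algebra for a language `L`. -/
structure Alg (L : Lang) : Type 1 where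
  carrier : Type
  interp : ∀ {n : ℕ}, L.ops n → (Fin n → carrier) → carrier

/-- Terms of the language `L` over a type `V` of variables. -/
inductive Term (L : Lang) (V : Type) : Type
  | var : V → Term L V
  | op : ∀ {n : ℕ}, L.ops n → (Fin n → Term L V) → Term L V

/-- Evaluation of a term in an algebra under an assignment of the variables. -/
def Term.eval {L : Lang} {V : Type} (A : Alg L) (v : V → A.carrier) :
    Term L V → A.carrier
  | .var x => v x
  | .op f ts => A.interp f (fun i => Term.eval A v (ts i))

/-- `θ` is a congruence of the algebra `A`. -/
def IsCongruence {L : Lang} (A : Alg L) (θ : A.carrier → A.carrier → Prop) : Prop :=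
  Equivalence θ ∧
    ∀ (n : ℕ) (f : L.ops n) (x y : Fin n → A.carrier),
      (∀ i, θ (x i) (y i)) → θ (A.interp f x) (A.interp f y)

/-- A relation `θ` is compatible with a subset `F`: related elements are either
both in or both out of `F` (stated one-sidedly; symmetry gives the rest). -/
def Compatible {L : Lang} (A : Alg L) (F : Set A.carrier)
    (θ : A.carrier → A.carrier → Prop) : Prop :=
  ∀ a b : A.carrier, θ a b → a ∈ F → b ∈ F

/-- `θ` is the Leibniz congruence of `F` on `A`: the largest congruence of `A`
compatible with `F`. -/
def IsLeibniz {L : Lang} (A : Alg L) (F : Set A.carrier)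
    (θ : A.carrier → A.carrier → Prop) : Prop :=
  IsCongruence A θ ∧ Compatible A F θ ∧
    ∀ θ', IsCongruence A θ' → Compatible A F θ' → ∀ a b, θ' a b → θ a b

/-- The non-indexed product language of a family of languages: its `n`-ary
symbols are `I`-indexed families of `n`-ary terms of the respective languages. -/
def prodLang {ι : Type} (L : ι → Lang) : Lang where
  ops n := ∀ i, Term (L i) (Fin n)

/-- The non-indexed product of a family of algebras: the family-of-terms
operations act coordinatewise. -/
def prodAlg {ι : Type} {L : ι → Lang} (A : ∀ i, Alg (L i)) : Alg (prodLang L) where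
  carrier := ∀ i, (A i).carrier
  interp f x i := Term.eval (A i) (fun k => x k i) (f i)

/-- A subset `S` of an algebra is closed under the operations. -/
def OpClosed {L : Lang} (A : Alg L) (S : Set A.carrier) : Prop :=
  ∀ (n : ℕ) (f : L.ops n) (x : Fin n → A.carrier),
    (∀ i, x i ∈ S) → A.interp f x ∈ S

/-- The subalgebra of `A` with universe the closed subset `S`. -/
def subAlg {L : Lang} (A : Alg L) (S : Set A.carrier) (h : OpClosed A S) :
    Alg L where
  carrier := {x // x ∈ S}
  interp f x := ⟨A.interp f (fun i => (x i).1), h _ f _ (fun i => (x i).2)⟩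

/-!
Project a congruence `θ` of the subdirect product to a coordinate `i`: `x θᵢ y` iff `x` and `y`
are the `i`-th coordinates of a `θ`-related pair. Surjectivity of the projection makes `θᵢ`
reflexive. Since the symbols of the non-indexed product language are arbitrary families of terms,
it has a binary operation `patch i` taking the `i`-th coordinate from its first argument and the
others from its second, and, for every operation `g` of `Aᵢ`, one acting as `g` in coordinate `i`.
The latter makes `θᵢ` compatible with the operations; `patch i` makes it transitive and, patching a
witness into an element of the filter, compatible with `Fᵢ`. So `θᵢ` lies below the Leibniz
congruence of `⟨Aᵢ, Fᵢ⟩`, the identity, and `θ`-related elements agree in every coordinate.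
-/

open Function

section ProductOperations

variable {ι : Type} {L : ι → Lang} [DecidableEq ι]

def patch (i : ι) : (prodLang L).ops 2 :=
  update (fun _ => Term.var 1) i (Term.var 0)

def liftOp (i : ι) {n : ℕ} (g : (L i).ops (n + 1)) : (prodLang L).ops (n + 1) :=
  update (fun _ => Term.var 0) i (Term.op g Term.var)

variable (A : ∀ i, Alg (L i))

theorem prodAlg_interp_patch_self (i : ι) (x : Fin 2 → (prodAlg A).carrier) :
    (prodAlg A).interp (patch i) x i = x 0 i := by
  simp [prodAlg, patch, Term.eval]

theorem prodAlg_interp_patch_of_ne {i j : ι} (hj : j ≠ i) (x : Fin 2 → (prodAlg A).carrier) :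
    (prodAlg A).interp (patch i) x j = x 1 j := by
  simp [prodAlg, patch, Term.eval, hj]

theorem prodAlg_interp_liftOp_self (i : ι) {n : ℕ} (g : (L i).ops (n + 1))
    (x : Fin (n + 1) → (prodAlg A).carrier) :
    (prodAlg A).interp (liftOp i g) x i = (A i).interp g (fun k => x k i) := by
  simp [prodAlg, liftOp, Term.eval]

end ProductOperations

section Subdirect

variable {ι : Type} {L : ι → Lang} {A : ∀ i, Alg (L i)}
  {S : Set (prodAlg A).carrier} {hS : OpClosed (prodAlg A) S}

def projRel (θ : (subAlg (prodAlg A) S hS).carrier → (subAlg (prodAlg A) S hS).carrier → Prop)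
    (i : ι) : (A i).carrier → (A i).carrier → Prop :=
  fun x y => ∃ u v, θ u v ∧ u.1 i = x ∧ v.1 i = y

theorem subAlg_interp_patch_val_self [DecidableEq ι] (i : ι)
    (x : Fin 2 → (subAlg (prodAlg A) S hS).carrier) :
    ((subAlg (prodAlg A) S hS).interp (patch i) x).1 i = (x 0).1 i :=
  prodAlg_interp_patch_self A i _

theorem subAlg_interp_patch_val_of_ne [DecidableEq ι] {i j : ι} (hj : j ≠ i)
    (x : Fin 2 → (subAlg (prodAlg A) S hS).carrier) :
    ((subAlg (prodAlg A) S hS).interp (patch i) x).1 j = (x 1).1 j :=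
  prodAlg_interp_patch_of_ne A hj _

theorem subAlg_interp_patch_of_apply_eq [DecidableEq ι] {i : ι}
    {u v : (subAlg (prodAlg A) S hS).carrier} (h : u.1 i = v.1 i) :
    (subAlg (prodAlg A) S hS).interp (patch i) ![u, v] = v := by
  refine Subtype.ext (funext fun j => ?_)
  rcases eq_or_ne j i with rfl | hj
  · exact (subAlg_interp_patch_val_self j _).trans h
  · exact subAlg_interp_patch_val_of_ne hj _

variable {θ : (subAlg (prodAlg A) S hS).carrier → (subAlg (prodAlg A) S hS).carrier → Prop}

theorem IsCongruence.interp_patch (hθ : IsCongruence (subAlg (prodAlg A) S hS) θ)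
    [DecidableEq ι] (i : ι) {u v p q : (subAlg (prodAlg A) S hS).carrier}
    (huv : θ u v) (hpq : θ p q) :
    θ ((subAlg (prodAlg A) S hS).interp (patch i) ![u, p])
      ((subAlg (prodAlg A) S hS).interp (patch i) ![v, q]) :=
  hθ.2 2 (patch i) _ _ fun k => by fin_cases k <;> assumption

theorem IsCongruence.projRel_trans (hθ : IsCongruence (subAlg (prodAlg A) S hS) θ) (i : ι)
    {x y z : (A i).carrier} : projRel θ i x y → projRel θ i y z → projRel θ i x z := by
  classical
  rintro ⟨u, v, huv, rfl, rfl⟩ ⟨p, q, hpq, hp, rfl⟩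
  -- `v` and `p` agree at `i`, so patching `v` into `p` gives back `p`
  have hvp : θ ((subAlg (prodAlg A) S hS).interp (patch i) ![u, p]) p := by
    simpa only [subAlg_interp_patch_of_apply_eq hp.symm] using
      hθ.interp_patch i huv (hθ.1.refl p)
  exact ⟨_, q, hθ.1.trans hvp hpq, subAlg_interp_patch_val_self i _, rfl⟩

theorem IsCongruence.projRel_interp (hθ : IsCongruence (subAlg (prodAlg A) S hS) θ) (i : ι)
    (hsurj : Surjective fun s : (subAlg (prodAlg A) S hS).carrier => s.1 i) {n : ℕ}
    (g : (L i).ops n) {x y : Fin n → (A i).carrier} (hxy : ∀ k, projRel θ i (x k) (y k)) :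
    projRel θ i ((A i).interp g x) ((A i).interp g y) := by
  classical
  cases n with
  | zero =>
    -- a nullary `g` need not lift to the product language, but then `x = y`
    obtain ⟨u, hu⟩ := hsurj ((A i).interp g x)
    exact ⟨u, u, hθ.1.refl u, hu, hu.trans (congrArg _ (Subsingleton.elim x y))⟩
  | succ n =>
    choose u v huv hu hv using hxy
    refine ⟨_, _, hθ.2 _ (liftOp i g) u v huv, ?_, ?_⟩
    · exact (prodAlg_interp_liftOp_self A i g _).trans (congrArg _ (funext hu))
    · exact (prodAlg_interp_liftOp_self A i g _).trans (congrArg _ (funext hv))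

theorem isCongruence_projRel (hθ : IsCongruence (subAlg (prodAlg A) S hS) θ) (i : ι)
    (hsurj : Surjective fun s : (subAlg (prodAlg A) S hS).carrier => s.1 i) :
    IsCongruence (A i) (projRel θ i) := by
  refine ⟨⟨fun x => ?_, ?_, hθ.projRel_trans i⟩, fun _ => hθ.projRel_interp i hsurj⟩
  · obtain ⟨u, rfl⟩ := hsurj x
    exact ⟨u, u, hθ.1.refl u, rfl, rfl⟩
  · rintro x y ⟨u, v, huv, rfl, rfl⟩
    exact ⟨v, u, hθ.1.symm huv, rfl, rfl⟩

theorem compatible_projRel (hθ : IsCongruence (subAlg (prodAlg A) S hS) θ)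
    {Fi : ∀ i, Set (A i).carrier}
    (hcomp : Compatible (subAlg (prodAlg A) S hS) {s | ∀ i, s.1 i ∈ Fi i} θ)
    (hne : ∃ s : (subAlg (prodAlg A) S hS).carrier, ∀ i, s.1 i ∈ Fi i) (i : ι) :
    Compatible (A i) (Fi i) (projRel θ i) := by
  classical
  rintro _ _ ⟨u, v, huv, rfl, rfl⟩ hu
  obtain ⟨s, hs⟩ := hne
  have hmem : ∀ j, ((subAlg (prodAlg A) S hS).interp (patch i) ![u, s]).1 j ∈ Fi j := by
    intro j
    rcases eq_or_ne j i with rfl | hj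
    · rw [subAlg_interp_patch_val_self]
      exact hu
    · rw [subAlg_interp_patch_val_of_ne hj]
      exact hs j
  have := hcomp _ _ (hθ.interp_patch i huv (hθ.1.refl s)) hmem i
  rwa [subAlg_interp_patch_val_self] at this

end Subdirect

/-- a subdirect product (non-indexed sense, surjective
projections, nonempty filter) of reduced matrices is reduced: if the Leibniz
congruence of each `⟨A i, Fi i⟩` is the identity, then any Leibniz congruence
of the subdirect product matrix is the identity. -/
theorem subdirect_product_of_reduced_is_reduced
    {ι : Type} {L : ι → Lang} (A : ∀ i, Alg (L i))
    (Fi : ∀ i, Set (A i).carrier)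
    (S : Set (prodAlg A).carrier) (hS : OpClosed (prodAlg A) S)
    (hsurj : ∀ i, Function.Surjective
      (fun s : (subAlg (prodAlg A) S hS).carrier => s.1 i))
    (hne : ∃ s : (subAlg (prodAlg A) S hS).carrier, ∀ i, s.1 i ∈ Fi i)
    (hred : ∀ i, IsLeibniz (A i) (Fi i) (fun a b => a = b)) :
    ∀ θ, IsLeibniz (subAlg (prodAlg A) S hS)
        {s : (subAlg (prodAlg A) S hS).carrier | ∀ i, s.1 i ∈ Fi i} θ →
      ∀ a c : (subAlg (prodAlg A) S hS).carrier, θ a c → a = c := by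
  rintro θ ⟨hθ, hcomp, -⟩ a c hac
  refine Subtype.ext (funext fun i => ?_)
  exact (hred i).2.2 (projRel θ i) (isCongruence_projRel hθ i (hsurj i))
    (compatible_projRel hθ hcomp hne i)
    _ _ ⟨a, c, hac, rfl, rfl⟩
end

section
/- If K₁ and K₂ are classes of matrices each closed under subdirect products (and containing trivial matrices as empty subdirect products), then the class K₁ ⊗ K₂ = {⟨A₁ ⊗ A₂, F₁ × F₂⟩ : ⟨A_i, F_i⟩ ∈ K_i} closed under isomorphism is also closed under subdirect products. -/
/-- The direct product of a family of algebras of the same language. -/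
def directProd {L : Lang} {J : Type} (B : J → Alg L) : Alg L where
  carrier := ∀ j, (B j).carrier
  interp f x j := (B j).interp f (fun k => x k j)

/-- The binary non-indexed product language: its `n`-ary symbols are pairs of
`n`-ary terms of the two languages. -/
def prodLang2 (L₁ L₂ : Lang) : Lang where
  ops n := Term L₁ (Fin n) × Term L₂ (Fin n)

/-- The binary non-indexed product of two algebras: pairs of terms act
coordinatewise. -/
def prodAlg2 {L₁ L₂ : Lang} (A₁ : Alg L₁) (A₂ : Alg L₂) :
    Alg (prodLang2 L₁ L₂) where
  carrier := A₁.carrier × A₂.carrier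
  interp f x :=
    (Term.eval A₁ (fun k => (x k).1) f.1, Term.eval A₂ (fun k => (x k).2) f.2)

/-- `f` is an isomorphism of matrices from `⟨A, F⟩` onto `⟨B, G⟩`. -/
def MatIso {L : Lang} (A B : Alg L) (F : Set A.carrier) (G : Set B.carrier)
    (f : A.carrier → B.carrier) : Prop :=
  Function.Bijective f ∧
  (∀ (n : ℕ) (op : L.ops n) (x : Fin n → A.carrier),
    f (A.interp op x) = B.interp op (fun i => f (x i))) ∧
  (∀ a, a ∈ F ↔ f a ∈ G)

/-- The class `K` of matrices is closed under subdirect products (up to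
isomorphism): any matrix isomorphic to a subdirect product — a subalgebra of a
direct product with surjective projections, with the restricted product filter
— of members of `K` belongs to `K`.  (Taking the empty index set, `K` contains
the trivial matrices, as empty subdirect products.) -/
def ClosedSubdirect {L : Lang} (K : ∀ A : Alg L, Set A.carrier → Prop) : Prop :=
  ∀ (J : Type) (B : J → Alg L) (G : ∀ j, Set (B j).carrier),
    (∀ j, K (B j) (G j)) →
    ∀ (S : Set (directProd B).carrier) (hS : OpClosed (directProd B) S),
      (∀ j, Function.Surjective
        (fun s : (subAlg (directProd B) S hS).carrier => s.1 j)) →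
      ∀ (C : Alg L) (H : Set C.carrier)
        (f : (subAlg (directProd B) S hS).carrier → C.carrier),
        MatIso (subAlg (directProd B) S hS) C
          {x : (subAlg (directProd B) S hS).carrier | ∀ j, x.1 j ∈ G j} H f →
        K C H

/-- The class `K₁ ⊗ K₂`: all matrices isomorphic to a binary non-indexed
product `⟨A₁ ⊗ A₂, F₁ × F₂⟩` of a member of `K₁` and a member of `K₂`. -/
def TensorClass {L₁ L₂ : Lang}
    (K₁ : ∀ A : Alg L₁, Set A.carrier → Prop)
    (K₂ : ∀ A : Alg L₂, Set A.carrier → Prop) :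
    ∀ C : Alg (prodLang2 L₁ L₂), Set C.carrier → Prop :=
  fun C H => ∃ (A₁ : Alg L₁) (F₁ : Set A₁.carrier)
    (A₂ : Alg L₂) (F₂ : Set A₂.carrier)
    (f : (prodAlg2 A₁ A₂).carrier → C.carrier),
    K₁ A₁ F₁ ∧ K₂ A₂ F₂ ∧ MatIso (prodAlg2 A₁ A₂) C (F₁ ×ˢ F₂) H f

section MatIso

variable {L : Lang}

theorem MatIso.refl (A : Alg L) (F : Set A.carrier) : MatIso A A F F id :=
  ⟨Function.bijective_id, fun _ _ _ => rfl, fun _ => Iff.rfl⟩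

theorem MatIso.comp {A B C : Alg L} {F : Set A.carrier} {G : Set B.carrier}
    {H : Set C.carrier} {f : A.carrier → B.carrier} {g : B.carrier → C.carrier}
    (hf : MatIso A B F G f) (hg : MatIso B C G H g) : MatIso A C F H (g ∘ f) :=
  ⟨hg.1.comp hf.1, fun n op x => by simp only [Function.comp_apply, hf.2.1, hg.2.1],
    fun a => (hf.2.2 a).trans (hg.2.2 (f a))⟩

theorem MatIso.of_isEmpty {A B : Alg L} (hA : IsEmpty A.carrier) (hB : IsEmpty B.carrier)
    (F : Set A.carrier) (G : Set B.carrier) (f : A.carrier → B.carrier) : MatIso A B F G f :=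
  ⟨⟨fun a => hA.elim a, fun b => hB.elim b⟩, fun _ _ x => hA.elim (A.interp _ x),
    fun a => hA.elim a⟩

theorem MatIso.pi {J : Type} {A B : J → Alg L} {F : ∀ j, Set (A j).carrier}
    {G : ∀ j, Set (B j).carrier} {φ : ∀ j, (A j).carrier → (B j).carrier}
    (hφ : ∀ j, MatIso (A j) (B j) (F j) (G j) (φ j)) :
    MatIso (directProd A) (directProd B) {x | ∀ j, x j ∈ F j} {y | ∀ j, y j ∈ G j}
      (Pi.map φ) :=
  ⟨Function.Bijective.piMap fun j => (hφ j).1,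
    fun n op x => funext fun j => (hφ j).2.1 n op fun k => x k j,
    fun x => forall_congr' fun j => (hφ j).2.2 (x j)⟩

theorem OpClosed.preimage {A B : Alg L} {S : Set B.carrier} (hS : OpClosed B S)
    {f : A.carrier → B.carrier}
    (hf : ∀ n (op : L.ops n) x, f (A.interp op x) = B.interp op fun i => f (x i)) :
    OpClosed A (f ⁻¹' S) := fun n op x hx => by
  simpa only [Set.mem_preimage, hf] using hS n op _ hx

theorem MatIso.subAlg_preimage {A B : Alg L} {F : Set A.carrier} {G : Set B.carrier}
    {f : A.carrier → B.carrier} (hf : MatIso A B F G f) (S : Set B.carrier)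
    (hS : OpClosed B S) :
    MatIso (subAlg A (f ⁻¹' S) (hS.preimage hf.2.1)) (subAlg B S hS)
      {x | x.1 ∈ F} {y | y.1 ∈ G} (fun x => ⟨f x.1, x.2⟩) := by
  refine ⟨⟨fun x y hxy => Subtype.ext (hf.1.1 (congrArg Subtype.val hxy)), fun y => ?_⟩,
    fun n op x => Subtype.ext (hf.2.1 n op _), fun x => hf.2.2 x.1⟩
  obtain ⟨a, ha⟩ := hf.1.2 y.1
  exact ⟨⟨a, by simp only [Set.mem_preimage, ha, y.2]⟩, Subtype.ext ha⟩

end MatIso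

theorem Term.eval_directProd {L : Lang} {J V : Type} (B : J → Alg L)
    (v : V → (directProd B).carrier) (t : Term L V) (j : J) :
    Term.eval (directProd B) v t j = Term.eval (B j) (fun k => v k j) t := by
  induction t with
  | var x => rfl
  | op f ts ih => exact congrArg ((B j).interp f) (funext ih)

theorem Term.eval_subAlg {L : Lang} {V : Type} (A : Alg L) (S : Set A.carrier)
    (hS : OpClosed A S) (v : V → (subAlg A S hS).carrier) (t : Term L V) :
    (Term.eval (subAlg A S hS) v t).1 = Term.eval A (fun k => (v k).1) t := by
  induction t with
  | var x => rfl
  | op f ts ih => exact congrArg (A.interp f) (funext ih)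

theorem opClosed_empty_iff {L : Lang} (A : Alg L) :
    OpClosed A ∅ ↔ IsEmpty (L.ops 0) := by
  refine ⟨fun h => ⟨fun c => h 0 c Fin.elim0 Fin.elim0⟩, fun h => ?_⟩
  rintro (_ | n) op x hx
  · exact h.elim op
  · exact hx 0

theorem isEmpty_ops_zero_of_isEmpty_term {L : Lang} (h : IsEmpty (Term L (Fin 0))) :
    IsEmpty (L.ops 0) :=
  ⟨fun c => h.false (.op c Fin.elim0)⟩

namespace ClosedSubdirect

variable {L : Lang} {K : ∀ A : Alg L, Set A.carrier → Prop}

theorem subAlg_mem (hK : ClosedSubdirect K) {J : Type} {B : J → Alg L}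
    {G : ∀ j, Set (B j).carrier} (hB : ∀ j, K (B j) (G j)) {S : Set (directProd B).carrier}
    (hS : OpClosed (directProd B) S)
    (hsurj : ∀ j, Function.Surjective fun s : (subAlg (directProd B) S hS).carrier => s.1 j) :
    K (subAlg (directProd B) S hS) {s | ∀ j, s.1 j ∈ G j} :=
  hK J B G hB S hS hsurj _ _ id (MatIso.refl _ _)

theorem exists_mem (hK : ClosedSubdirect K) : ∃ (A : Alg L) (F : Set A.carrier), K A F :=
  ⟨_, _, hK.subAlg_mem (B := Empty.elim) (G := fun j => j.elim) (fun j => j.elim)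
    (S := Set.univ) (fun _ _ _ _ => trivial) (fun j => j.elim)⟩

theorem exists_isEmpty_mem (hK : ClosedSubdirect K) (h : IsEmpty (L.ops 0)) :
    ∃ (A : Alg L) (F : Set A.carrier), IsEmpty A.carrier ∧ K A F := by
  refine ⟨_, _, ?_, hK.subAlg_mem (B := Empty.elim) (G := fun j => j.elim) (fun j => j.elim)
    ((opClosed_empty_iff _).mpr h) (fun j => j.elim)⟩
  exact ⟨fun s => s.2⟩

end ClosedSubdirect

section TensorClass

variable {L₁ L₂ : Lang} {K₁ : ∀ A : Alg L₁, Set A.carrier → Prop}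
  {K₂ : ∀ A : Alg L₂, Set A.carrier → Prop}

theorem TensorClass.of_matIso {C D : Alg (prodLang2 L₁ L₂)} {H : Set C.carrier}
    {H' : Set D.carrier} {g : C.carrier → D.carrier} (hC : TensorClass K₁ K₂ C H)
    (hg : MatIso C D H H' g) : TensorClass K₁ K₂ D H' := by
  obtain ⟨A₁, F₁, A₂, F₂, f, hK₁, hK₂, hf⟩ := hC
  exact ⟨A₁, F₁, A₂, F₂, g ∘ f, hK₁, hK₂, hf.comp hg⟩

theorem tensorClass_of_isEmpty (h₁ : ClosedSubdirect K₁) (h₂ : ClosedSubdirect K₂)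
    (hops : IsEmpty ((prodLang2 L₁ L₂).ops 0)) {C : Alg (prodLang2 L₁ L₂)}
    (hC : IsEmpty C.carrier) (H : Set C.carrier) : TensorClass K₁ K₂ C H := by
  rcases isEmpty_prod.mp hops with hT | hT
  · obtain ⟨A₁, F₁, hA₁, hK₁⟩ := h₁.exists_isEmpty_mem (isEmpty_ops_zero_of_isEmpty_term hT)
    obtain ⟨A₂, F₂, hK₂⟩ := h₂.exists_mem
    have hA : IsEmpty (prodAlg2 A₁ A₂).carrier := ⟨fun p => hA₁.false p.1⟩
    exact ⟨A₁, F₁, A₂, F₂, hA.elim, hK₁, hK₂, .of_isEmpty hA hC _ _ _⟩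
  · obtain ⟨A₁, F₁, hK₁⟩ := h₁.exists_mem
    obtain ⟨A₂, F₂, hA₂, hK₂⟩ := h₂.exists_isEmpty_mem (isEmpty_ops_zero_of_isEmpty_term hT)
    have hA : IsEmpty (prodAlg2 A₁ A₂).carrier := ⟨fun p => hA₂.false p.2⟩
    exact ⟨A₁, F₁, A₂, F₂, hA.elim, hK₁, hK₂, .of_isEmpty hA hC _ _ _⟩

end TensorClass

section Factors

variable {L₁ L₂ : Lang} {J : Type} {A₁ : J → Alg L₁} {A₂ : J → Alg L₂}
  {S : Set (directProd fun j => prodAlg2 (A₁ j) (A₂ j)).carrier}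

def fstFactor (S : Set (directProd fun j => prodAlg2 (A₁ j) (A₂ j)).carrier) :
    Set (directProd A₁).carrier :=
  (fun s j => (s j).1) '' S

def sndFactor (S : Set (directProd fun j => prodAlg2 (A₁ j) (A₂ j)).carrier) :
    Set (directProd A₂).carrier :=
  (fun s j => (s j).2) '' S

theorem opClosed_fstFactor (hS : OpClosed _ S) (hne : S.Nonempty) :
    OpClosed (directProd A₁) (fstFactor S) := by
  obtain ⟨s₀, hs₀⟩ := hne
  intro n t x hx
  choose s hs hsx using hx
  refine ⟨_, hS (n + 1) (.op t fun i => .var i.succ, .var 0) (Fin.cons s₀ s)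
    (Fin.cases hs₀ hs),
    funext fun j => congrArg ((A₁ j).interp t) (funext fun i => congrFun (hsx i) j)⟩

theorem opClosed_sndFactor (hS : OpClosed _ S) (hne : S.Nonempty) :
    OpClosed (directProd A₂) (sndFactor S) := by
  obtain ⟨s₀, hs₀⟩ := hne
  intro n t x hx
  choose s hs hsx using hx
  refine ⟨_, hS (n + 1) (.var 0, .op t fun i => .var i.succ) (Fin.cons s₀ s)
    (Fin.cases hs₀ hs),
    funext fun j => congrArg ((A₂ j).interp t) (funext fun i => congrFun (hsx i) j)⟩

theorem pair_mem_of_mem_factors (hS : OpClosed _ S) {x : (directProd A₁).carrier}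
    {y : (directProd A₂).carrier} (hx : x ∈ fstFactor S) (hy : y ∈ sndFactor S) :
    (fun j => (x j, y j)) ∈ S := by
  obtain ⟨s, hs, rfl⟩ := hx
  obtain ⟨s', hs', rfl⟩ := hy
  exact hS 2 (.var 0, .var 1) ![s, s'] (Fin.forall_fin_two.mpr ⟨hs, hs'⟩)

theorem surjective_fstFactor (hS : OpClosed _ S) (hne : S.Nonempty)
    (hsurj : ∀ j, Function.Surjective fun s : (subAlg _ S hS).carrier => s.1 j) (j : J) :
    Function.Surjective fun x : (subAlg _ _ (opClosed_fstFactor hS hne)).carrier => x.1 j := by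
  intro a
  obtain ⟨s₀, -⟩ := hne
  obtain ⟨⟨s, hs⟩, hsj⟩ := hsurj j (a, (s₀ j).2)
  exact ⟨⟨_, s, hs, rfl⟩, congrArg Prod.fst hsj⟩

theorem surjective_sndFactor (hS : OpClosed _ S) (hne : S.Nonempty)
    (hsurj : ∀ j, Function.Surjective fun s : (subAlg _ S hS).carrier => s.1 j) (j : J) :
    Function.Surjective fun y : (subAlg _ _ (opClosed_sndFactor hS hne)).carrier => y.1 j := by
  intro b
  obtain ⟨s₀, -⟩ := hne
  obtain ⟨⟨s, hs⟩, hsj⟩ := hsurj j ((s₀ j).1, b)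
  exact ⟨⟨_, s, hs, rfl⟩, congrArg Prod.snd hsj⟩

theorem matIso_prodAlg2_factors (hS : OpClosed _ S) (hne : S.Nonempty)
    (F₁ : ∀ j, Set (A₁ j).carrier) (F₂ : ∀ j, Set (A₂ j).carrier) :
    MatIso (prodAlg2 (subAlg _ _ (opClosed_fstFactor hS hne))
        (subAlg _ _ (opClosed_sndFactor hS hne))) (subAlg _ S hS)
      ({x | ∀ j, x.1 j ∈ F₁ j} ×ˢ {y | ∀ j, y.1 j ∈ F₂ j}) {s | ∀ j, s.1 j ∈ F₁ j ×ˢ F₂ j}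
      (fun p => ⟨fun j => (p.1.1 j, p.2.1 j), pair_mem_of_mem_factors hS p.1.2 p.2.2⟩) := by
  refine ⟨⟨?_, ?_⟩, ?_, ?_⟩
  · rintro ⟨x, y⟩ ⟨x', y'⟩ h
    have h' := fun j => congrFun (congrArg Subtype.val h) j
    exact Prod.ext (Subtype.ext (funext fun j => congrArg Prod.fst (h' j)))
      (Subtype.ext (funext fun j => congrArg Prod.snd (h' j)))
  · rintro ⟨s, hs⟩
    exact ⟨(⟨_, s, hs, rfl⟩, ⟨_, s, hs, rfl⟩), rfl⟩
  · intro n op p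
    refine Subtype.ext (funext fun j => ?_)
    simp only [prodAlg2, Term.eval_subAlg, Term.eval_directProd]
    rfl
  · exact fun p => forall_and.symm

end Factors

theorem tensorClass_subdirect {L₁ L₂ : Lang} {K₁ : ∀ A : Alg L₁, Set A.carrier → Prop}
    {K₂ : ∀ A : Alg L₂, Set A.carrier → Prop} (h₁ : ClosedSubdirect K₁)
    (h₂ : ClosedSubdirect K₂) {J : Type} {A₁ : J → Alg L₁} {A₂ : J → Alg L₂}
    {F₁ : ∀ j, Set (A₁ j).carrier} {F₂ : ∀ j, Set (A₂ j).carrier}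
    (hK₁ : ∀ j, K₁ (A₁ j) (F₁ j)) (hK₂ : ∀ j, K₂ (A₂ j) (F₂ j))
    {S : Set (directProd fun j => prodAlg2 (A₁ j) (A₂ j)).carrier} (hS : OpClosed _ S)
    (hsurj : ∀ j, Function.Surjective fun s : (subAlg _ S hS).carrier => s.1 j) :
    TensorClass K₁ K₂ (subAlg _ S hS) {s | ∀ j, s.1 j ∈ F₁ j ×ˢ F₂ j} := by
  rcases S.eq_empty_or_nonempty with rfl | hne
  · refine tensorClass_of_isEmpty h₁ h₂ ((opClosed_empty_iff _).mp hS) ?_ _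
    exact ⟨fun s => s.2⟩
  · exact ⟨_, _, _, _, _, h₁.subAlg_mem hK₁ _ (surjective_fstFactor hS hne hsurj),
      h₂.subAlg_mem hK₂ _ (surjective_sndFactor hS hne hsurj),
      matIso_prodAlg2_factors hS hne F₁ F₂⟩

/-- if `K₁` and `K₂` are classes of matrices closed under
subdirect products, then the class `K₁ ⊗ K₂` is also closed under subdirect
products. -/
theorem tensor_closed_under_subdirect_products
    {L₁ L₂ : Lang}
    (K₁ : ∀ A : Alg L₁, Set A.carrier → Prop)
    (K₂ : ∀ A : Alg L₂, Set A.carrier → Prop)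
    (h₁ : ClosedSubdirect K₁) (h₂ : ClosedSubdirect K₂) :
    ClosedSubdirect (TensorClass K₁ K₂) := by
  intro J B G hB S hS hsurj C H f hf
  choose A₁ F₁ A₂ F₂ φ hK₁ hK₂ hφ using hB
  have hΦ := (MatIso.pi hφ).subAlg_preimage S hS
  refine (tensorClass_subdirect h₁ h₂ hK₁ hK₂ _ fun j => ?_).of_matIso (hΦ.comp hf)
  intro a
  obtain ⟨⟨s, hs⟩, hsj⟩ := hsurj j (φ j a)
  obtain ⟨x, rfl⟩ := (Function.Bijective.piMap fun j => (hφ j).1).2 s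
  exact ⟨⟨x, hs⟩, (hφ j).1.1 hsj⟩
end
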